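/- arXiv:2001.04687 — 4 statements merged into one kernel-verified Lean document; each statement's English description precedes it below -/
import Mathlib

section
/- Let X be a finitely generated torsion ℤ_p[[T]]-module whose coinvariants X/TX have order exactly p and whose invariants X[T] vanish. Suppose X_fin is its maximal finite submodule. Then either X_fin = 0, or X = X_fin (in which case X is finite). -/
private lemma stmt_8_aux (p : ℕ) [Fact p.Prime] (X : Type*) [AddCommGroup X]
    [Module (PowerSeries ℤ_[p]) X]
    (hinv : ∀ x : X, (PowerSeries.X : PowerSeries ℤ_[p]) • x = 0 → x = 0) :
    ∀ (n : ℕ) (x : X), ((PowerSeries.X : PowerSeries ℤ_[p]) ^ n) • x = 0 → x = 0 := by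
  intro n
  induction n with
  | zero => intro x hx; simpa using hx
  | succ k ih =>
      intro x hx
      rw [pow_succ, mul_smul] at hx
      exact hinv x (ih _ hx)

/-- Let `X` be a finitely generated torsion `ℤ_p[[T]]`-module whose coinvariants `X/TX`
have order exactly `p` and whose invariants `X[T]` vanish.  If `X_fin` is the maximal
finite submodule of `X`, then either `X_fin = 0`, or `X = X_fin` (so `X` is finite). -/
theorem stmt_8 (p : ℕ) [Fact p.Prime] (X : Type*) [AddCommGroup X]
    [Module (PowerSeries ℤ_[p]) X] [Module.Finite (PowerSeries ℤ_[p]) X]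
    (htors : Module.IsTorsion (PowerSeries ℤ_[p]) X)
    (hcoinv : Nat.card (X ⧸ LinearMap.range ((PowerSeries.X : PowerSeries ℤ_[p]) •
        (LinearMap.id : X →ₗ[PowerSeries ℤ_[p]] X))) = p)
    (hinv : ∀ x : X, (PowerSeries.X : PowerSeries ℤ_[p]) • x = 0 → x = 0)
    (Xfin : Submodule (PowerSeries ℤ_[p]) X) (hfin : Finite Xfin)
    (hmax : ∀ S : Submodule (PowerSeries ℤ_[p]) X, Finite S → S ≤ Xfin) :
    Xfin = ⊥ ∨ Xfin = ⊤ := by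
  left
  rw [Submodule.eq_bot_iff]
  intro x hx
  -- the sequence n ↦ X^n • x lives in the finite set Xfin, so two terms coincide
  have hmem : ∀ n : ℕ, ((PowerSeries.X : PowerSeries ℤ_[p]) ^ n) • x ∈ Xfin := fun n =>
    Xfin.smul_mem _ hx
  obtain ⟨i, j, hne, hij⟩ := Finite.exists_ne_map_eq_of_infinite
    (fun n : ℕ => (⟨((PowerSeries.X : PowerSeries ℤ_[p]) ^ n) • x, hmem n⟩ : Xfin))
  have hij' : ((PowerSeries.X : PowerSeries ℤ_[p]) ^ i) • x
      = ((PowerSeries.X : PowerSeries ℤ_[p]) ^ j) • x := congrArg Subtype.val hij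
  -- WLOG i < j
  rcases hne.lt_or_gt with h | h
  case _ =>
    exact stmt_8_aux p X hinv i x (by
      have key : ((PowerSeries.X : PowerSeries ℤ_[p]) ^ i) •
          (x - ((PowerSeries.X : PowerSeries ℤ_[p]) ^ (j - i)) • x) = 0 := by
        rw [smul_sub, ← mul_smul, ← pow_add, hij']
        rw [Nat.add_sub_cancel' h.le]
        exact sub_self _
      have hx0 : x - ((PowerSeries.X : PowerSeries ℤ_[p]) ^ (j - i)) • x = 0 :=
        stmt_8_aux p X hinv i _ key
      -- (1 - X^(j-i)) • x = 0 with 1 - X^(j-i) a unit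
      have hu : IsUnit ((1 : PowerSeries ℤ_[p]) - PowerSeries.X ^ (j - i)) := by
        rw [PowerSeries.isUnit_iff_constantCoeff]
        simp [Nat.sub_ne_zero_of_lt h]
      obtain ⟨u, hu⟩ := hu
      have : (u : PowerSeries ℤ_[p]) • x = 0 := by
        rw [hu, sub_smul, one_smul]
        rw [sub_eq_zero] at hx0
        exact hx0 ▸ sub_self _
      have : x = 0 := by
        have := congrArg (fun y => (↑u⁻¹ : PowerSeries ℤ_[p]) • y) this
        simpa [← mul_smul] using this
      simp [this]
    )
  case _ =>
    exact stmt_8_aux p X hinv j x (by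
      have key : ((PowerSeries.X : PowerSeries ℤ_[p]) ^ j) •
          (x - ((PowerSeries.X : PowerSeries ℤ_[p]) ^ (i - j)) • x) = 0 := by
        rw [smul_sub, ← mul_smul, ← pow_add, ← hij']
        rw [Nat.add_sub_cancel' h.le]
        exact sub_self _
      have hx0 : x - ((PowerSeries.X : PowerSeries ℤ_[p]) ^ (i - j)) • x = 0 :=
        stmt_8_aux p X hinv j _ key
      have hu : IsUnit ((1 : PowerSeries ℤ_[p]) - PowerSeries.X ^ (i - j)) := by
        rw [PowerSeries.isUnit_iff_constantCoeff]
        simp [Nat.sub_ne_zero_of_lt h]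
      obtain ⟨u, hu⟩ := hu
      have : (u : PowerSeries ℤ_[p]) • x = 0 := by
        rw [hu, sub_smul, one_smul]
        rw [sub_eq_zero] at hx0
        exact hx0 ▸ sub_self _
      have : x = 0 := by
        have := congrArg (fun y => (↑u⁻¹ : PowerSeries ℤ_[p]) • y) this
        simpa [← mul_smul] using this
      simp [this]
    )
end

section
/- Let d be a square-free integer with d ≡ 1 (mod 4) and d not divisible by 7, and let K = ℚ(√-7). Then the elliptic curve E: y² = x³ + 21dx² + 112d²x over ℚ has discriminant whose odd part involves 7 and d, and E has good reduction at 2 (equivalently its discriminant has 2-adic valuation compatible with a minimal model of good reduction at 2). -/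
/-!
For `d = 4k + 1` the substitution `x = 4X + 4d`, `y = 8Y + 4X + 12` (scaling `u = 2`) turns
`y² = x³ + 21dx² + 112d²x` into a Weierstrass equation with integer coefficients. Since `E` has
discriminant `-2¹² · 7³ · d⁶` and a change of variables with scaling `u` divides the
discriminant by `u¹²`, the new model has discriminant `-7³ · d⁶`, which is odd.
-/

namespace WeierstrassCurve

variable {R : Type*} [CommRing R]

def starTwist (d : R) : WeierstrassCurve R :=
  { a₁ := 0, a₂ := 21 * d, a₃ := 0, a₄ := 112 * d ^ 2, a₆ := 0 }

lemma starTwist_Δ (d : R) : (starTwist d).Δ = -(2 ^ 12 * 7 ^ 3) * d ^ 6 := by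
  simp only [starTwist, Δ, b₂, b₄, b₆, b₈]
  ring

def starTwistChangeAtTwo (d : ℚ) : VariableChange ℚ :=
  ⟨Units.mk0 2 two_ne_zero, 4 * d, 1, 12⟩

def starTwistModelAtTwo (k : ℤ) : WeierstrassCurve ℤ :=
  ⟨1, 33 * k + 8, 3, 328 * k ^ 2 + 164 * k + 19, 848 * k ^ 3 + 636 * k ^ 2 + 159 * k + 11⟩

lemma starTwistChangeAtTwo_smul (k : ℤ) :
    starTwistChangeAtTwo (4 * k + 1) • starTwist ((4 * k + 1 : ℤ) : ℚ) =
      (starTwistModelAtTwo k).map (Int.castRingHom ℚ) := by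
  rw [variableChange_def]
  ext <;>
    simp only [starTwistChangeAtTwo, starTwist, starTwistModelAtTwo, Units.val_inv_eq_inv_val,
      Units.val_mk0, map_a₁, map_a₂, map_a₃, map_a₄, map_a₆, eq_intCast, Int.cast_add, Int.cast_mul,
      Int.cast_pow, Int.cast_ofNat, Int.cast_one] <;>
    ring

lemma starTwistModelAtTwo_Δ (k : ℤ) : (starTwistModelAtTwo k).Δ = -7 ^ 3 * (4 * k + 1) ^ 6 := by
  apply Int.cast_injective (α := ℚ)
  rw [← eq_intCast (Int.castRingHom ℚ), ← map_Δ, ← starTwistChangeAtTwo_smul,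
    variableChange_Δ, starTwist_Δ]
  simp only [starTwistChangeAtTwo, Units.val_inv_eq_inv_val, Units.val_mk0, Int.cast_add,
    Int.cast_mul, Int.cast_neg, Int.cast_pow, Int.cast_ofNat, Int.cast_one]
  ring

end WeierstrassCurve

theorem stmt_9_general (d : ℤ) (hd4 : d % 4 = 1)
    (E : WeierstrassCurve ℚ)
    (hE : E = { a₁ := 0, a₂ := 21 * (d : ℚ), a₃ := 0, a₄ := 112 * (d : ℚ) ^ 2, a₆ := 0 }) :
    ∃ (W : WeierstrassCurve ℤ) (C : WeierstrassCurve.VariableChange ℚ),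
      C • E = W.map (Int.castRingHom ℚ) ∧ ¬ (2 : ℤ) ∣ W.Δ := by
  obtain ⟨k, rfl⟩ : ∃ k, d = 4 * k + 1 := ⟨d / 4, by omega⟩
  refine ⟨WeierstrassCurve.starTwistModelAtTwo k,
    WeierstrassCurve.starTwistChangeAtTwo (4 * k + 1),
    hE ▸ WeierstrassCurve.starTwistChangeAtTwo_smul k, ?_⟩
  rw [WeierstrassCurve.starTwistModelAtTwo_Δ, ← even_iff_two_dvd, Int.not_even_iff_odd]
  exact (by decide : Odd (-7 ^ 3 : ℤ)).mul (Odd.pow ⟨2 * k, by ring⟩)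

/-- Let `d` be a square-free integer with `d ≡ 1 (mod 4)` and `7 ∤ d`.  Then the elliptic
curve `E : y² = x³ + 21dx² + 112d²x` over `ℚ` has good reduction at `2`: there is a
Weierstrass model with integral coefficients, related to `E` by a change of variables
over `ℚ`, whose discriminant is a `2`-adic unit (i.e. odd at the prime `2`). -/
theorem stmt_9 (d : ℤ) (hsf : Squarefree d) (hd4 : d % 4 = 1) (hd7 : ¬ (7 : ℤ) ∣ d)
    (E : WeierstrassCurve ℚ)
    (hE : E = { a₁ := 0, a₂ := 21 * (d : ℚ), a₃ := 0, a₄ := 112 * (d : ℚ) ^ 2, a₆ := 0 }) :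
    ∃ (W : WeierstrassCurve ℤ) (C : WeierstrassCurve.VariableChange ℚ),
      C • E = W.map (Int.castRingHom ℚ) ∧ ¬ (2 : ℤ) ∣ W.Δ :=
  stmt_9_general d hd4 E hE
end

section
/- Let G be a group, M a G-module, and g a central element of G such that g - 1 acts invertibly on M. Then H¹(G, M) = 0 (Sah's lemma). -/
/-!
For a cocycle `f` and `h` commuting with `g`, expanding `f (g * h) = f (h * g)` gives
`(ρ g - 1) (f h) = (ρ h - 1) (f g)`. Writing `f g = (ρ g - 1) x`, the right side becomes
`(ρ g - 1) (ρ h x - x)` because `ρ g` commutes with `ρ h`, so injectivity of `ρ g - 1` forces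
`f h = ρ h x - x`: every cocycle is a coboundary.
-/

namespace groupCohomology

universe u

variable {k G : Type u} [CommRing k] [Group G] {A : Rep k G}

theorem cocycles₁_sub_eq_of_commute (f : cocycles₁ A) {g h : G} (hgh : Commute g h) :
    A.ρ g (f h) - f h = A.ρ h (f g) - f g := by
  have hgh' := (mem_cocycles₁_iff (f : G → A)).1 f.2 g h
  rw [hgh.eq, (mem_cocycles₁_iff (f : G → A)).1 f.2 h g] at hgh'
  exact sub_eq_sub_iff_add_eq_add.2 hgh'.symm

theorem mem_coboundaries₁_of_mem_center {g : G} (hg : g ∈ Subgroup.center G)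
    (hinj : Function.Injective (fun m : A => A.ρ g m - m)) (f : cocycles₁ A) {x : A}
    (hx : A.ρ g x - x = f g) : ⇑f ∈ coboundaries₁ A := by
  refine ⟨x, funext fun h => hinj ?_⟩
  have hgh : Commute g h := (Subgroup.mem_center_iff.1 hg h).symm
  have hρ : A.ρ g (A.ρ h x) = A.ρ h (A.ρ g x) := LinearMap.congr_fun (hgh.map A.ρ).eq x
  change A.ρ g (A.ρ h x - x) - (A.ρ h x - x) = A.ρ g (f h) - f h
  rw [cocycles₁_sub_eq_of_commute f hgh, ← hx, map_sub, map_sub, hρ]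
  abel

end groupCohomology

/-- Sah's lemma: let `G` be a group, `M` a `G`-module, and `g` a central element of `G`
such that `g - 1` acts invertibly on `M`.  Then `H¹(G, M) = 0`. -/
theorem stmt_16 (G : Type) [Group G] (M : Rep ℤ G)
    (g : G) (hg : g ∈ Subgroup.center G)
    (hbij : Function.Bijective (fun m : M => M.ρ g m - m)) :
    ∀ x : groupCohomology.H1 M, x = 0 := by
  intro x
  induction x using groupCohomology.H1_induction_on with | h f => ?_
  obtain ⟨y, hy⟩ := hbij.surjective (f g)
  exact (groupCohomology.H1π_eq_zero_iff f).2
    (groupCohomology.mem_coboundaries₁_of_mem_center hg hbij.injective f hy)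
end

section
/- Let d be a square-free integer with d ≡ 1 (mod 4), and consider F₀ = ℚ(√-7, √(d√-7)) = ℚ(⁴√(-7d²)). Then F₀/ℚ is a degree 4 extension containing ℚ(√-7), and F₀/ℚ(√-7) is a quadratic extension ramified at the prime ((-1-√-7)/2) above 2. -/
/-! The degree claims come from norms: `N_{K/ℚ}(d√-7) = 7d²` is not a square in `ℚ`, so
`d√-7` is not a square in `K`. For the ramification, `γ = (-1-√-7)/2` is a root of
`X² + X + 2` and `α² = d√-7 = -d(1 + 2γ)` with `d = 4k + 1`; this makes `(1 + α)²` a multiple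
`γu` with `u ≡ 1` modulo `𝔓 = (γ, 1 + α)`, whence `𝔓² = (γ)`. Since `γ𝓞_{F₀}` has norm
`N_{K/ℚ}(γ)² = 4`, `𝔓` has norm `2` and is maximal. -/

open NumberField Polynomial

section Generator

variable {E L : Type*} [Field E] [Field L] [Algebra E L] {x : L}

theorem finrank_eq_natDegree_minpoly_of_adjoin_eq_top (hx : IsIntegral E x)
    (hgen : Algebra.adjoin E {x} = ⊤) : Module.finrank E L = (minpoly E x).natDegree :=
  (PowerBasis.ofAdjoinEqTop hx hgen).finrank

theorem minpoly_eq_of_adjoin_eq_top (hgen : Algebra.adjoin E {x} = ⊤) {p : E[X]} (hp : p.Monic)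
    (hpx : aeval x p = 0) (hdeg : p.natDegree = Module.finrank E L) : minpoly E x = p := by
  refine (minpoly.unique_of_degree_le_degree_minpoly E x hp hpx ?_).symm
  rw [degree_eq_natDegree hp.ne_zero, degree_eq_natDegree (minpoly.ne_zero ⟨p, hp, hpx⟩), hdeg,
    finrank_eq_natDegree_minpoly_of_adjoin_eq_top ⟨p, hp, hpx⟩ hgen]

theorem norm_eq_coeff_zero_of_adjoin_eq_top (hgen : Algebra.adjoin E {x} = ⊤) {p : E[X]}
    (hp : p.Monic) (hpx : aeval x p = 0) (hdeg : p.natDegree = Module.finrank E L) :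
    Algebra.norm E x = (-1) ^ p.natDegree * p.coeff 0 := by
  rw [← minpoly_eq_of_adjoin_eq_top hgen hp hpx hdeg]
  exact Algebra.PowerBasis.norm_gen_eq_coeff_zero_minpoly
    (PowerBasis.ofAdjoinEqTop ⟨p, hp, hpx⟩ hgen)

theorem minpoly_eq_X_sq_sub_C {c : E} (hx : x ^ 2 = algebraMap E L c) (hc : ¬IsSquare c) :
    minpoly E x = X ^ 2 - C c := by
  have hirr : Irreducible (X ^ 2 - C c) :=
    X_pow_sub_C_irreducible_of_prime Nat.prime_two fun b hb => hc ⟨b, by rw [← hb, sq]⟩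
  exact (minpoly.eq_of_irreducible_of_monic hirr (by simp [hx])
    (monic_X_pow_sub_C _ two_ne_zero)).symm

theorem finrank_eq_two_of_sq_eq (hgen : Algebra.adjoin E {x} = ⊤) {c : E}
    (hx : x ^ 2 = algebraMap E L c) (hc : ¬IsSquare c) : Module.finrank E L = 2 := by
  have hint : IsIntegral E x := ⟨X ^ 2 - C c, monic_X_pow_sub_C _ two_ne_zero, by simp [hx]⟩
  rw [finrank_eq_natDegree_minpoly_of_adjoin_eq_top hint hgen, minpoly_eq_X_sq_sub_C hx hc,
    natDegree_X_pow_sub_C]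

theorem norm_eq_neg_of_sq_eq (hgen : Algebra.adjoin E {x} = ⊤) {c : E}
    (hx : x ^ 2 = algebraMap E L c) (hc : ¬IsSquare c) : Algebra.norm E x = -c := by
  rw [norm_eq_coeff_zero_of_adjoin_eq_top hgen (monic_X_pow_sub_C c two_ne_zero) (by simp [hx])
    (by rw [finrank_eq_two_of_sq_eq hgen hx hc, natDegree_X_pow_sub_C])]
  simp

end Generator

theorem not_isSquare_algebraMap_mul {F K : Type*} [Field F] [Field K] [Algebra F K]
    (hK : Even (Module.finrank F K)) {c : F} (hc : c ≠ 0) {x : K}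
    (hx : ¬IsSquare (Algebra.norm F x)) : ¬IsSquare (algebraMap F K c * x) := by
  rintro ⟨b, hb⟩
  obtain ⟨m, hm⟩ := hK
  have hN := congrArg (Algebra.norm F) hb
  rw [map_mul, map_mul, Algebra.norm_algebraMap, hm, pow_add] at hN
  refine hx ⟨Algebra.norm F b / c ^ m, ?_⟩
  field_simp
  linear_combination hN

theorem Ideal.span_pair_sq_eq_span_singleton {R : Type*} [CommRing R] {a b u : R}
    (hb : b ^ 2 = a * u) (hu : u - 1 ∈ span {a, b}) : span {a, b} ^ 2 = span {a} := by
  have ha : a ∈ span {a, b} := subset_span (by simp)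
  have hb' : b ∈ span {a, b} := subset_span (by simp)
  apply le_antisymm
  · rw [sq, span_mul_span', span_le]
    rintro _ ⟨x, hx, y, hy, rfl⟩
    simp only [Set.mem_insert_iff, Set.mem_singleton_iff] at hx hy
    rw [SetLike.mem_coe, mem_span_singleton]
    rcases hx with rfl | rfl <;> rcases hy with rfl | rfl
    exacts [dvd_mul_right _ _, dvd_mul_right _ _, dvd_mul_left _ _, ⟨u, by rw [← hb]; ring⟩]
  · have h : b * b - a * (u - 1) ∈ span {a, b} ^ 2 := by
      rw [sq]
      exact sub_mem (mul_mem_mul hb' hb') (mul_mem_mul ha hu)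
    rwa [show b * b - a * (u - 1) = a by linear_combination hb, ← span_singleton_le_iff_mem] at h

theorem Ideal.span_pair_one_add_sq_eq_span_singleton {R : Type*} [CommRing R] {g a k : R}
    (hg : g ^ 2 + g + 2 = 0) (ha : a ^ 2 = (4 * k + 1) * (-1 - 2 * g)) :
    span {g, 1 + a} ^ 2 = span {g} := by
  -- `2 = -g(g + 1)` turns `(1 + a)² = 2a - 4k - 2(4k + 1)g` into a multiple of `g`
  refine span_pair_sq_eq_span_singleton (u := (g + 1) * (2 * k - a + (4 * k + 1) * g))
    (by linear_combination ha - (2 * k - a + (4 * k + 1) * g) * hg) ?_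
  rw [mem_span_pair]
  exact ⟨2 * k + 1 - k * (g + 1) + (4 * k + 1) * (g + 1), -(g + 1),
    by linear_combination -k * hg⟩

theorem Ideal.isMaximal_of_absNorm_pow_eq {S : Type*} [CommRing S] [IsDedekindDomain S]
    [Module.Free ℤ S] [Module.Finite ℤ S] {J : Ideal S} {p n : ℕ} (hp : p.Prime)
    (hn : n ≠ 0) (hJ : absNorm (J ^ n) = p ^ n) : J.IsMaximal := by
  rw [map_pow] at hJ
  have hJp : absNorm J = p := Nat.pow_left_injective hn hJ
  have hprime : J.IsPrime := isPrime_of_irreducible_absNorm (hJp ▸ hp.prime.irreducible)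
  refine hprime.isMaximal fun hbot => ?_
  rw [hbot, absNorm_bot] at hJp
  exact hp.ne_zero hJp.symm

theorem NumberField.RingOfIntegers.norm_eq_two_of_sq_add_add_two {K : Type*} [Field K]
    [NumberField K] (hK : Module.finrank ℚ K = 2) {γ : 𝓞 K}
    (hgen : Algebra.adjoin ℚ {(γ : K)} = ⊤) (hγ : (γ : K) ^ 2 + γ + 2 = 0) :
    Algebra.norm ℤ γ = 2 := by
  have hdeg : (X ^ 2 + X + C 2 : ℚ[X]).natDegree = 2 := by compute_degree!
  have hN := Algebra.coe_norm_int γ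
  rw [norm_eq_coeff_zero_of_adjoin_eq_top hgen (by monicity!) (by simp [hγ])
    (hdeg.trans hK.symm), hdeg] at hN
  norm_num at hN
  exact_mod_cast hN

theorem NumberField.exists_isMaximal_map_span_eq_sq {K L : Type*} [Field K] [NumberField K]
    [Field L] [NumberField L] [Algebra K L] (hL : Module.finrank K L = 2) {γ : 𝓞 K}
    (hγ : γ ^ 2 + γ + 2 = 0) (hN : Algebra.norm ℤ γ = 2) {α : L} {k : ℤ}
    (hα : α ^ 2 = algebraMap (𝓞 K) L ((4 * k + 1) * (-1 - 2 * γ))) :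
    ∃ 𝔓 : Ideal (𝓞 L), 𝔓.IsMaximal ∧
      (Ideal.span {γ}).map (algebraMap (𝓞 K) (𝓞 L)) = 𝔓 ^ 2 := by
  let a : 𝓞 L :=
    ⟨α, IsIntegral.of_pow two_pos (hα ▸ (RingOfIntegers.isIntegral _).algebraMap)⟩
  have ha : a ^ 2 = (4 * k + 1) * (-1 - 2 * algebraMap (𝓞 K) (𝓞 L) γ) := by
    simpa [map_ofNat] using (RingOfIntegers.ext hα : a ^ 2 = algebraMap (𝓞 K) (𝓞 L) _)
  have hg : (algebraMap (𝓞 K) (𝓞 L) γ) ^ 2 + algebraMap (𝓞 K) (𝓞 L) γ + 2 = 0 := by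
    simpa [map_ofNat] using congrArg (algebraMap (𝓞 K) (𝓞 L)) hγ
  have h𝔓 := Ideal.span_pair_one_add_sq_eq_span_singleton hg ha
  rw [Ideal.map_span, Set.image_singleton, ← h𝔓]
  refine ⟨_, Ideal.isMaximal_of_absNorm_pow_eq Nat.prime_two two_ne_zero ?_, rfl⟩
  rw [h𝔓, ← Set.image_singleton, ← Ideal.map_span,
    Ideal.absNorm_algebraMap (𝓞 K) (𝓞 L), ← IsFractionRing.finrank_eq (𝓞 K) K (𝓞 L) L, hL,
    Ideal.absNorm_span_singleton, hN]
  rfl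

theorem stmt_19_general (d : ℤ) (hd4 : d % 4 = 1)
    (K : Type*) [Field K] [NumberField K]
    (s : K) (hs : s ^ 2 = -7) (hKgen : Algebra.adjoin ℚ {s} = ⊤)
    (F₀ : Type*) [Field F₀] [NumberField F₀] [Algebra K F₀]
    (α : F₀) (hα : α ^ 2 = (d : F₀) * algebraMap K F₀ s)
    (hFgen : Algebra.adjoin K {α} = ⊤)
    (γ : 𝓞 K) (hγ : (γ : K) * 2 = -1 - s) :
    Module.finrank ℚ F₀ = 4 ∧
    Module.finrank K F₀ = 2 ∧
    (∃ t : F₀, t ^ 2 = -7) ∧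
    ∃ 𝔓 : Ideal (𝓞 F₀), 𝔓.IsMaximal ∧
      Ideal.map (algebraMap (𝓞 K) (𝓞 F₀)) (Ideal.span {γ}) = 𝔓 ^ 2 := by
  have h7 : ¬IsSquare (-7 : ℚ) := by norm_num
  have hsQ : s ^ 2 = algebraMap ℚ K (-7) := by simp [hs]
  have hK : Module.finrank ℚ K = 2 := finrank_eq_two_of_sq_eq hKgen hsQ h7
  have hF : Module.finrank K F₀ = 2 := by
    refine finrank_eq_two_of_sq_eq hFgen (c := algebraMap ℚ K d * s) (by simp [hα])
      (not_isSquare_algebraMap_mul (hK ▸ even_two) (by exact_mod_cast (show d ≠ 0 by omega)) ?_)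
    rw [norm_eq_neg_of_sq_eq hKgen hsQ h7]
    norm_num
  refine ⟨by rw [← Module.finrank_mul_finrank ℚ K F₀, hK, hF], hF,
    ⟨algebraMap K F₀ s, by rw [← map_pow, hs, map_neg, map_ofNat]⟩, ?_⟩
  have hsγ : s = -1 - 2 * (γ : K) := by linear_combination hγ
  have hγK : (γ : K) ^ 2 + γ + 2 = 0 := by
    linear_combination (hs - (s - 1 - 2 * (γ : K)) * hsγ) / 4
  have hγgen : Algebra.adjoin ℚ {(γ : K)} = ⊤ := by
    rw [eq_top_iff, ← hKgen, Algebra.adjoin_le_iff, Set.singleton_subset_iff, hsγ]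
    exact sub_mem (neg_mem (one_mem _))
      (mul_mem (ofNat_mem _ 2) (Algebra.self_mem_adjoin_singleton ℚ _))
  obtain ⟨k, rfl⟩ : ∃ k : ℤ, d = 4 * k + 1 := ⟨d / 4, by omega⟩
  refine NumberField.exists_isMaximal_map_span_eq_sq hF
    (RingOfIntegers.ext (by simpa [map_ofNat] using hγK))
    (RingOfIntegers.norm_eq_two_of_sq_add_add_two hK hγgen hγK) (α := α) (k := k) ?_
  rw [hα, hsγ]
  simp [map_ofNat, IsScalarTower.algebraMap_apply (𝓞 K) K F₀]

/-- Let `d` be a square-free integer with `d ≡ 1 (mod 4)` and `7 ∤ d`.  Let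
`K = ℚ(√-7)` (generated by `s` with `s² = -7`) and `F₀ = K(√(d√-7)) = ℚ(⁴√(-7d²))`
(generated over `K` by `α` with `α² = d·s`).  Then `F₀/ℚ` has degree `4` (so contains
the quadratic field `K`), `F₀/K` is quadratic, and the prime `𝔭 = ((-1-√-7)/2)` of `K`
above `2` ramifies in `F₀/K` (i.e. `𝔭 O_{F₀} = 𝔓²` for a maximal ideal `𝔓`). -/
theorem stmt_19 (d : ℤ) (hsf : Squarefree d) (hd4 : d % 4 = 1) (hd7 : ¬ (7 : ℤ) ∣ d)
    (K : Type*) [Field K] [NumberField K]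
    (s : K) (hs : s ^ 2 = -7) (hKgen : Algebra.adjoin ℚ {s} = ⊤)
    (F₀ : Type*) [Field F₀] [NumberField F₀] [Algebra K F₀]
    (α : F₀) (hα : α ^ 2 = (d : F₀) * algebraMap K F₀ s)
    (hFgen : Algebra.adjoin K {α} = ⊤)
    (γ : 𝓞 K) (hγ : (γ : K) * 2 = -1 - s) :
    Module.finrank ℚ F₀ = 4 ∧
    Module.finrank K F₀ = 2 ∧
    (∃ t : F₀, t ^ 2 = -7) ∧
    ∃ 𝔓 : Ideal (𝓞 F₀), 𝔓.IsMaximal ∧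
      Ideal.map (algebraMap (𝓞 K) (𝓞 F₀)) (Ideal.span {γ}) = 𝔓 ^ 2 :=
  stmt_19_general d hd4 K s hs hKgen F₀ α hα hFgen γ hγ
end
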